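/- With H and its nonbacktracking powers H^{(n)} as above, and Ũ_n(ξ) := U_n(ξ/2) the rescaled Chebyshev polynomial of the second kind, one has Ũ_n(H) = Σ_{k≥0} (M−1)^{-k} H^{(n−2k)} for all n ≥ 0, with the convention H^{(m)} = 0 for m < 0. -/

import Mathlib

/-!
Prepending a step `x → x₀` to a nonbacktracking walk `x₀ x₁ x₂ …` keeps it nonbacktracking unless
`x = x₁`. In that case the walk is `x z x x₂ …` with `z ≠ x₂`, and summing over `z` gives
`∑_{z ≠ x₂} |H x z|² = M/(M-1) - 1/(M-1) = 1` times the weight of `x x₂ …` (which vanishes unless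
`|H x x₂|² = 1/(M-1)`). For walks of length one there is no `x₂`, and the whole diagonal
`M/(M-1) = 1 + (M-1)⁻¹` of `H²` survives. Hence `H H^{(n)} = H^{(n+1)} + H^{(n-1)}` for `n ≥ 2`
and `H H^{(1)} = H^{(2)} + (1 + (M-1)⁻¹)`, which make `∑_k (M-1)^{-k} H^{(n-2k)}` satisfy the
recurrence of `Ũ_n`.
-/

open Classical in
/-- The `n`-th nonbacktracking power of a matrix. -/
noncomputable def nbPow {ι : Type*} [Fintype ι] [DecidableEq ι]
    (H : Matrix ι ι ℂ) (n : ℕ) : Matrix ι ι ℂ :=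
  Matrix.of fun x y =>
    ∑ p : Fin (n + 1) → ι,
      if p 0 = x ∧ p (Fin.last n) = y ∧
          (∀ i : ℕ, ∀ h : i + 2 ≤ n, p ⟨i, by omega⟩ ≠ p ⟨i + 2, by omega⟩)
      then ∏ i : Fin n, H (p i.castSucc) (p i.succ) else 0

/-- The rescaled Chebyshev polynomial of the second kind, `Ũ_n(ξ) = U_n(ξ/2)`. -/
noncomputable def tildeU (n : ℕ) : Polynomial ℂ :=
  (Polynomial.Chebyshev.U ℂ (n : ℤ)).comp (Polynomial.C 2⁻¹ * Polynomial.X)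

open Finset Matrix Polynomial

section Walks
variable {ι : Type*}

def IsNonbacktracking {n : ℕ} (p : Fin (n + 1) → ι) : Prop :=
  ∀ i : ℕ, ∀ h : i + 2 ≤ n, p ⟨i, by omega⟩ ≠ p ⟨i + 2, by omega⟩

theorem isNonbacktracking_of_le_one {n : ℕ} (hn : n ≤ 1) (p : Fin (n + 1) → ι) :
    IsNonbacktracking p := fun _ _ => by omega

theorem isNonbacktracking_cons {n : ℕ} (z : ι) (p : Fin (n + 2) → ι) :
    IsNonbacktracking (Fin.cons z p : Fin (n + 3) → ι) ↔ z ≠ p 1 ∧ IsNonbacktracking p := by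
  constructor
  · intro hp
    refine ⟨by simpa [Fin.cons, Fin.cases_succ'] using hp 0 (by omega), fun i hi => ?_⟩
    simpa [Fin.cons, Fin.cases_succ'] using hp (i + 1) (by omega)
  · rintro ⟨hz, hp⟩ (_ | i) hi
    · simpa [Fin.cons, Fin.cases_succ'] using hz
    · simpa [Fin.cons, Fin.cases_succ'] using hp i (by omega)

def walkWeight {R : Type*} [CommMonoid R] (H : Matrix ι ι R) {n : ℕ} (p : Fin (n + 1) → ι) : R :=
  ∏ i : Fin n, H (p i.castSucc) (p i.succ)

theorem walkWeight_cons {R : Type*} [CommMonoid R] (H : Matrix ι ι R) {n : ℕ} (z : ι)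
    (p : Fin (n + 1) → ι) :
    walkWeight H (Fin.cons z p : Fin (n + 2) → ι) = H z (p 0) * walkWeight H p := by
  simp [walkWeight, Fin.prod_univ_succ]

theorem walkWeight_eq_zero_of_first_eq_zero {R : Type*} [CommMonoidWithZero R]
    (H : Matrix ι ι R) {n : ℕ} {p : Fin (n + 2) → ι} (h : H (p 0) (p 1) = 0) : walkWeight H p = 0 :=
  prod_eq_zero (mem_univ 0) h

theorem Fintype.sum_fin_cons [Fintype ι] {M : Type*} [AddCommMonoid M] {n : ℕ}
    (f : (Fin (n + 1) → ι) → M) :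
    ∑ q, f q = ∑ z, ∑ p : Fin n → ι, f (Fin.cons z p) := by
  rw [← (Fin.consEquiv fun _ => ι).sum_comp, Fintype.sum_prod_type]
  rfl

end Walks

section NonbacktrackingPowers
open Classical
variable {ι : Type*} [Fintype ι] [DecidableEq ι] (H : Matrix ι ι ℂ)

theorem nbPow_apply (n : ℕ) (x y : ι) :
    nbPow H n x y = ∑ p : Fin (n + 1) → ι,
      if p 0 = x ∧ p (Fin.last n) = y ∧ IsNonbacktracking p then walkWeight H p else 0 :=
  rfl

theorem nbPow_zero : nbPow H 0 = 1 := by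
  ext x y
  rw [nbPow_apply, Fintype.sum_eq_single fun _ => x]
  · simp [walkWeight, isNonbacktracking_of_le_one, one_apply]
  · intro p hp
    rw [if_neg]
    rintro ⟨hx, -⟩
    exact hp (funext fun i => by rwa [Fin.fin_one_eq_zero i])

theorem nbPow_one : nbPow H 1 = H := by
  ext x y
  rw [nbPow_apply, Fintype.sum_eq_single ![x, y]]
  · simp [walkWeight, isNonbacktracking_of_le_one]
  · intro p hp
    rw [if_neg]
    rintro ⟨hx, hy, -⟩
    exact hp (funext fun i => by fin_cases i <;> simp [hx, ← hy])

theorem mul_nbPow_apply (n : ℕ) (x y : ι) :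
    (H * nbPow H n) x y = ∑ p : Fin (n + 1) → ι,
      if p (Fin.last n) = y ∧ IsNonbacktracking p then H x (p 0) * walkWeight H p else 0 := by
  simp only [mul_apply, nbPow_apply, mul_sum]
  rw [sum_comm]
  refine sum_congr rfl fun p _ => ?_
  rw [Fintype.sum_eq_single (p 0)]
  · simp
  · intro z hz
    simp [Ne.symm hz]

theorem nbPow_add_two_apply (n : ℕ) (x y : ι) :
    nbPow H (n + 2) x y = ∑ p : Fin (n + 2) → ι,
      if p (Fin.last (n + 1)) = y ∧ IsNonbacktracking p ∧ x ≠ p 1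
      then H x (p 0) * walkWeight H p else 0 := by
  rw [nbPow_apply, Fintype.sum_fin_cons, sum_comm]
  refine sum_congr rfl fun p _ => ?_
  rw [Fintype.sum_eq_single x]
  · simp [Fin.cons_last, isNonbacktracking_cons, walkWeight_cons, and_comm]
  · intro z hz
    simp [hz]

noncomputable def backtrackPart (n : ℕ) : Matrix ι ι ℂ :=
  of fun x y => ∑ p : Fin (n + 2) → ι,
    if p (Fin.last (n + 1)) = y ∧ IsNonbacktracking p ∧ x = p 1
    then H x (p 0) * walkWeight H p else 0

theorem mul_nbPow_succ (n : ℕ) : H * nbPow H (n + 1) = nbPow H (n + 2) + backtrackPart H n := by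
  ext x y
  rw [mul_nbPow_apply, Matrix.add_apply, nbPow_add_two_apply, backtrackPart, of_apply,
    ← sum_add_distrib]
  refine sum_congr rfl fun p _ => ?_
  by_cases hx : x = p 1 <;> simp [hx]

theorem backtrackPart_zero : backtrackPart H 0 = diagonal fun x => (H * H) x x := by
  ext x y
  rw [backtrackPart, of_apply, Fintype.sum_fin_cons, diagonal_apply, mul_apply]
  simp only [Fin.cons_last, Fin.cons_one, Fin.cons_zero, walkWeight_cons,
    isNonbacktracking_of_le_one le_rfl, true_and]
  refine (sum_congr rfl fun z _ =>
    Fintype.sum_eq_single (fun _ => x) fun r hr => if_neg ?_).trans ?_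
  · rintro ⟨-, hx⟩
    exact hr (funext fun i => by rw [Fin.fin_one_eq_zero i, hx])
  · by_cases hxy : x = y <;> simp [hxy, walkWeight]

variable {H}

theorem backtrackPart_succ {c D : ℂ} (hedge : ∀ x z, H x z ≠ 0 → H x z * H z x = c)
    (hdiag : ∀ x, (H * H) x x = D) (n : ℕ) :
    backtrackPart H (n + 1) = (D - c) • nbPow H (n + 1) := by
  ext x y
  rw [backtrackPart, of_apply, Matrix.smul_apply, nbPow_apply, Fintype.sum_fin_cons, sum_comm,
    smul_sum]
  refine sum_congr rfl fun r _ => ?_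
  simp only [Fin.cons_last, isNonbacktracking_cons, Fin.cons_one, walkWeight_cons, Fin.cons_zero]
  by_cases hr : r 0 = x ∧ r (Fin.last (n + 1)) = y ∧ IsNonbacktracking r
  · obtain ⟨rfl, hy, hnb⟩ := hr
    simp only [hy, hnb, true_and, and_true, if_true, ← mul_assoc, smul_eq_mul]
    rw [← sum_filter, filter_ne', sum_erase_eq_sub (mem_univ _), ← sum_mul, ← mul_apply, hdiag,
      ← sub_mul]
    by_cases hw : walkWeight H r = 0
    · simp [hw]
    · rw [hedge _ _ fun h => hw (walkWeight_eq_zero_of_first_eq_zero H h)]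
  · rw [if_neg hr, smul_zero]
    refine sum_eq_zero fun z _ => if_neg ?_
    rintro ⟨hy, ⟨-, hnb⟩, hx⟩
    exact hr ⟨hx.symm, hy, hnb⟩

theorem mul_nbPow_one {D : ℂ} (hdiag : ∀ x, (H * H) x x = D) :
    H * nbPow H 1 = nbPow H 2 + D • nbPow H 0 := by
  rw [mul_nbPow_succ, backtrackPart_zero, nbPow_zero, smul_one_eq_diagonal]
  simp only [hdiag]

theorem mul_nbPow_add_two {c D : ℂ} (hedge : ∀ x z, H x z ≠ 0 → H x z * H z x = c)
    (hdiag : ∀ x, (H * H) x x = D) (n : ℕ) :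
    H * nbPow H (n + 2) = nbPow H (n + 3) + (D - c) • nbPow H (n + 1) := by
  rw [mul_nbPow_succ, backtrackPart_succ hedge hdiag]

end NonbacktrackingPowers

section ChebyshevSum
variable {K R : Type*} [CommRing K] [Ring R] [Algebra K R]

def stepTwoSum (c : K) (a : ℕ → R) (n : ℕ) : R :=
  ∑ k ∈ range (n / 2 + 1), c ^ k • a (n - 2 * k)

variable (c : K) (a : ℕ → R)

@[simp] theorem stepTwoSum_zero : stepTwoSum c a 0 = a 0 := by simp [stepTwoSum]

@[simp] theorem stepTwoSum_one : stepTwoSum c a 1 = a 1 := by simp [stepTwoSum]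

theorem stepTwoSum_add_two (n : ℕ) :
    stepTwoSum c a (n + 2) = a (n + 2) + c • stepTwoSum c a n := by
  rw [stepTwoSum, stepTwoSum, show (n + 2) / 2 + 1 = n / 2 + 1 + 1 by omega,
    sum_range_succ', smul_sum, add_comm]
  congr 1
  · simp
  · refine sum_congr rfl fun k _ => ?_
    rw [show n + 2 - 2 * (k + 1) = n - 2 * k by omega, smul_smul, pow_succ']

variable {c a} {x : R}

theorem mul_stepTwoSum_succ (hmul₀ : x * a 0 = a 1) (hmul₁ : x * a 1 = a 2 + (1 + c) • a 0)
    (hmul : ∀ n, x * a (n + 2) = a (n + 3) + a (n + 1)) (n : ℕ) :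
    x * stepTwoSum c a (n + 1) = stepTwoSum c a (n + 2) + stepTwoSum c a n := by
  induction n using Nat.twoStepInduction with
  | zero =>
    rw [stepTwoSum_add_two, stepTwoSum_one, hmul₁, stepTwoSum_zero, add_smul, one_smul]
    abel
  | one =>
    rw [stepTwoSum_add_two, stepTwoSum_add_two, mul_add, hmul, mul_smul_comm, stepTwoSum_zero,
      stepTwoSum_one, hmul₀]
    module
  | more n ih _ =>
    rw [stepTwoSum_add_two c a (n + 1), mul_add, mul_smul_comm, ih, hmul,
      stepTwoSum_add_two c a (n + 2), stepTwoSum_add_two c a n]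
    module

theorem aeval_chebyshevS_eq_stepTwoSum (ha₀ : a 0 = 1) (ha₁ : a 1 = x)
    (hmul₁ : x * a 1 = a 2 + (1 + c) • a 0)
    (hmul : ∀ n, x * a (n + 2) = a (n + 3) + a (n + 1)) (n : ℕ) :
    aeval x (Chebyshev.S K n) = stepTwoSum c a n := by
  induction n using Nat.twoStepInduction with
  | zero => simp [ha₀]
  | one => simp [ha₁]
  | more n ih₀ ih₁ =>
    have hmul₀ : x * a 0 = a 1 := by rw [ha₀, ha₁, mul_one]
    rw [show ((n + 2 : ℕ) : ℤ) = n + 2 by push_cast; ring, Chebyshev.S_add_two, map_sub, map_mul,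
      aeval_X, ih₀, ← Nat.cast_succ, ih₁, mul_stepTwoSum_succ hmul₀ hmul₁ hmul,
      add_sub_cancel_right]

end ChebyshevSum

theorem tildeU_eq_chebyshevS (n : ℕ) : tildeU n = Chebyshev.S ℂ n := by
  rw [tildeU, Chebyshev.S_eq_U_comp_half_mul_X, invOf_eq_inv]

theorem Matrix.IsHermitian.apply_mul_apply_swap {𝕜 ι : Type*} [RCLike 𝕜] {H : Matrix ι ι 𝕜}
    (hH : H.IsHermitian) (x z : ι) : H x z * H z x = (‖H x z‖ : 𝕜) ^ 2 := by
  rw [← hH.apply z x, RCLike.star_def, RCLike.mul_conj]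

open Classical in
theorem tildeU_eq_sum_nbPow_general {ι : Type*} [Fintype ι] [DecidableEq ι]
    (H : Matrix ι ι ℂ) (A : ι → ι → Prop) (M : ℕ) (hM : 2 ≤ M)
    (hHerm : H.IsHermitian)
    (hcard : ∀ x, Nat.card {y // A x y} = M)
    (hH : ∀ x y, ‖H x y‖ ^ 2 = if A x y then 1 / ((M : ℝ) - 1) else 0) :
    ∀ n : ℕ, Polynomial.aeval H (tildeU n) =
      ∑ k ∈ Finset.range (n / 2 + 1), (((M : ℂ) - 1)⁻¹) ^ k • nbPow H (n - 2 * k) := by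
  set c : ℂ := ((M : ℂ) - 1)⁻¹
  have hpair (x z : ι) : H x z * H z x = if A x z then c else 0 := by
    rw [hHerm.apply_mul_apply_swap, ← RCLike.ofReal_pow, hH]
    split_ifs <;> simp [c]
  have hedge (x z : ι) (hxz : H x z ≠ 0) : H x z * H z x = c := by
    have hA : A x z := by
      by_contra hA
      exact hxz (by simpa [hA] using hH x z)
    rw [hpair, if_pos hA]
  have hdiag (x : ι) : (H * H) x x = 1 + c := by
    have hM' : (M : ℂ) - 1 ≠ 0 := sub_ne_zero.mpr (by exact_mod_cast (by omega : M ≠ 1))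
    simp_rw [mul_apply, hpair, ← sum_filter, sum_const, ← Fintype.card_subtype,
      ← Nat.card_eq_fintype_card, hcard, nsmul_eq_mul, c]
    field_simp
    ring
  intro n
  rw [tildeU_eq_chebyshevS]
  refine aeval_chebyshevS_eq_stepTwoSum (nbPow_zero H) (nbPow_one H) (mul_nbPow_one hdiag)
    (fun n => ?_) n
  simpa using mul_nbPow_add_two hedge hdiag n

open Classical in
/-- `Ũ_n(H) = Σ_{k≥0} (M−1)^{-k} H^{(n−2k)}` (only the terms with `2k ≤ n` contribute,
by the convention `H^{(m)} = 0` for `m < 0`). -/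
theorem tildeU_eq_sum_nbPow {ι : Type*} [Fintype ι] [DecidableEq ι]
    (H : Matrix ι ι ℂ) (A : ι → ι → Prop) (M : ℕ) (hM : 2 ≤ M)
    (hHerm : H.IsHermitian)
    (hAsymm : ∀ x y, A x y ↔ A y x)
    (hAirr : ∀ x, ¬ A x x)
    (hcard : ∀ x, Nat.card {y // A x y} = M)
    (hH : ∀ x y, ‖H x y‖ ^ 2 = if A x y then 1 / ((M : ℝ) - 1) else 0) :
    ∀ n : ℕ, Polynomial.aeval H (tildeU n) =
      ∑ k ∈ Finset.range (n / 2 + 1), (((M : ℂ) - 1)⁻¹) ^ k • nbPow H (n - 2 * k) :=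
  tildeU_eq_sum_nbPow_general H A M hM hHerm hcard hH
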